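/- Let G = (X, +, ≤) be an ordered group whose order is a semiorder, and let A(G) := {x ∈ X : the set ℤx = {nx : n ∈ ℤ} is an antichain of (X, ≤)}. Then A(G) is a normal subgroup of G, a convex subset of (X, ≤), and it is the largest subgroup of G which is an antichain (it is an antichain and contains every subgroup of G that is an antichain). -/

import Mathlib

/-!
In a semiorder the trace preorder (`x ≤_T y` iff every `z < x` is `< y` and every `z > y` is
`> x`) is total, and in an ordered group it is compatible with `+`. An element lies in `A(G)` iff
each of its positive multiples is `0` or incomparable with `0`, and by antisymmetry this property
passes to every element trace-between two elements having it. So `A(G)` is convex, since `≤`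
refines `≤_T`, and closed under addition, since by totality `n(u + v)` lies trace-between
`2n u` and `2n v`.
-/

namespace ThrPaper

universe u

variable {X : Type*}

/-- The strict order associated to a reflexive relation `le`. -/
def Lt (le : X → X → Prop) (x y : X) : Prop := le x y ∧ ¬ le y x

/-- `x` and `y` are incomparable with respect to `le`. -/
def Incomp (le : X → X → Prop) (x y : X) : Prop := ¬ le x y ∧ ¬ le y x

/-- `le` is a partial order (reflexive, transitive, antisymmetric). -/
def IsPartialOrderRel (le : X → X → Prop) : Prop :=
  (∀ x, le x x) ∧ (∀ x y z, le x y → le y z → le x z) ∧ ∀ x y, le x y → le y x → x = y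

/-- `le` is total. -/
def IsTotalRel (le : X → X → Prop) : Prop := ∀ x y, le x y ∨ le y x

/-- Compatibility of a relation with the (not necessarily abelian) group operation. -/
def IsCompat {G : Type*} [AddGroup G] (le : G → G → Prop) : Prop :=
  ∀ a b x y : G, le x y → le (a + x + b) (a + y + b)

/-- The trace quasi-order `≤_pred`: `x ≤_pred y` iff every `z < x` satisfies `z < y`. -/
def PredLe (le : X → X → Prop) (x y : X) : Prop := ∀ z, Lt le z x → Lt le z y

/-- The trace quasi-order `≤_succ`: `x ≤_succ y` iff every `z > y` satisfies `z > x`. -/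
def SuccLe (le : X → X → Prop) (x y : X) : Prop := ∀ z, Lt le y z → Lt le x z

/-- `le` is a threshold order: `≤_pred` and `≤_succ` are equal and are total orders. -/
def IsThresholdOrder (le : X → X → Prop) : Prop :=
  (∀ x y, PredLe le x y ↔ SuccLe le x y) ∧
  (∀ x y, PredLe le x y ∨ PredLe le y x) ∧
  ∀ x y, PredLe le x y → PredLe le y x → x = y

/-- The poset `2 ⊕ 2` embeds into `le`. -/
def Embeds2p2 (le : X → X → Prop) : Prop :=
  ∃ a b c d : X, Lt le a b ∧ Lt le c d ∧
    Incomp le a c ∧ Incomp le a d ∧ Incomp le b c ∧ Incomp le b d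

/-- The poset `3 ⊕ 1` embeds into `le`. -/
def Embeds3p1 (le : X → X → Prop) : Prop :=
  ∃ a b c d : X, Lt le a b ∧ Lt le b c ∧ Incomp le d a ∧ Incomp le d b ∧ Incomp le d c

/-- The poset `1 ⊕ 2` embeds into `le`. -/
def Embeds1p2 (le : X → X → Prop) : Prop :=
  ∃ a b c : X, Lt le a b ∧ Incomp le c a ∧ Incomp le c b


def TraceLe (le : X → X → Prop) (x y : X) : Prop := PredLe le x y ∧ SuccLe le x y

section Relation

variable {le : X → X → Prop} {a b c d u v x y z : X}

theorem Incomp.symm (h : Incomp le x y) : Incomp le y x := ⟨h.2, h.1⟩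

theorem incomp_map_iff {f : X → X} (hf : ∀ x y, le (f x) (f y) ↔ le x y) :
    Incomp le (f x) (f y) ↔ Incomp le x y := by
  simp only [Incomp, hf]

theorem lt_map_iff {f : X → X} (hf : ∀ x y, le (f x) (f y) ↔ le x y) :
    Lt le (f x) (f y) ↔ Lt le x y := by
  simp only [Lt, hf]

theorem TraceLe.refl (x : X) : TraceLe le x x := ⟨fun _ h => h, fun _ h => h⟩

theorem TraceLe.trans (hxy : TraceLe le x y) (hyz : TraceLe le y z) : TraceLe le x z :=
  ⟨fun w h => hyz.1 w (hxy.1 w h), fun w h => hxy.2 w (hyz.2 w h)⟩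

theorem TraceLe.map (e : X ≃ X) (he : ∀ x y, le (e x) (e y) ↔ le x y) (h : TraceLe le x y) :
    TraceLe le (e x) (e y) := by
  refine ⟨fun w hw => ?_, fun w hw => ?_⟩
  · rw [← e.apply_symm_apply w, lt_map_iff he] at hw ⊢
    exact h.1 _ hw
  · rw [← e.apply_symm_apply w, lt_map_iff he] at hw ⊢
    exact h.2 _ hw

theorem traceLe_of_le [IsTrans X le] (h : le x y) : TraceLe le x y :=
  ⟨fun _ hz => ⟨_root_.trans hz.1 h, fun hyz => hz.2 (_root_.trans h hyz)⟩,
    fun _ hz => ⟨_root_.trans h hz.1, fun hzx => hz.2 (_root_.trans hzx h)⟩⟩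

theorem incomp_of_traceLe_of_traceLe [IsTrans X le] [Std.Antisymm le]
    (ha : a ≠ c → Incomp le c a) (hb : b ≠ c → Incomp le c b)
    (hax : TraceLe le a x) (hxb : TraceLe le x b) (hx : x ≠ c) : Incomp le c x := by
  refine ⟨fun hcx => ?_, fun hxc => ?_⟩
  · have hlt : Lt le c b := hxb.1 c ⟨hcx, fun hxc => hx (antisymm hxc hcx)⟩
    exact (hb fun hbc => hlt.2 (hbc ▸ hlt.1)).1 hlt.1
  · have hlt : Lt le a c := hax.2 c ⟨hxc, fun hcx => hx (antisymm hxc hcx)⟩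
    exact (ha fun hac => hlt.2 (hac ▸ hlt.1)).2 hlt.1

theorem lt_or_lt_of_not_embeds2p2 [IsTrans X le] (h : ¬ Embeds2p2 le)
    (hab : Lt le a b) (hcd : Lt le c d) : Lt le a d ∨ Lt le c b := by
  have htrans := IsTrans.trans (r := le)
  by_contra! hcon
  unfold Lt at *
  -- `¬ a < d` and `¬ c < b` force all four incomparabilities through transitivity.
  exact h ⟨a, b, c, d, hab, hcd, by unfold Incomp; grind⟩

theorem lt_or_lt_of_not_embeds3p1 [IsTrans X le] (h : ¬ Embeds3p1 le)
    (hab : Lt le a b) (hbc : Lt le b c) (d : X) : Lt le a d ∨ Lt le d c := by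
  have htrans := IsTrans.trans (r := le)
  by_contra! hcon
  unfold Lt at *
  exact h ⟨a, b, c, d, hab, hbc, by unfold Incomp; grind⟩

section Semiorder

variable [IsTrans X le]

theorem traceLe_of_not_predLe (h22 : ¬ Embeds2p2 le) (h31 : ¬ Embeds3p1 le)
    (h : ¬ PredLe le u v) : TraceLe le v u := by
  obtain ⟨a, hau, hav⟩ : ∃ a, Lt le a u ∧ ¬ Lt le a v := by simpa [PredLe] using h
  exact ⟨fun z hzv => (lt_or_lt_of_not_embeds2p2 h22 hzv hau).resolve_right hav,
    fun z huz => (lt_or_lt_of_not_embeds3p1 h31 hau huz v).resolve_left hav⟩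

theorem traceLe_of_not_succLe (h22 : ¬ Embeds2p2 le) (h31 : ¬ Embeds3p1 le)
    (h : ¬ SuccLe le u v) : TraceLe le v u := by
  obtain ⟨b, hvb, hub⟩ : ∃ b, Lt le v b ∧ ¬ Lt le u b := by simpa [SuccLe] using h
  exact ⟨fun z hzv => (lt_or_lt_of_not_embeds3p1 h31 hzv hvb u).resolve_right hub,
    fun z huz => (lt_or_lt_of_not_embeds2p2 h22 hvb huz).resolve_right hub⟩

theorem traceLe_total (h22 : ¬ Embeds2p2 le) (h31 : ¬ Embeds3p1 le) (u v : X) :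
    TraceLe le u v ∨ TraceLe le v u := by
  by_cases hp : PredLe le u v
  · by_cases hs : SuccLe le u v
    · exact Or.inl ⟨hp, hs⟩
    · exact Or.inr (traceLe_of_not_succLe h22 h31 hs)
  · exact Or.inr (traceLe_of_not_predLe h22 h31 hp)

end Semiorder

end Relation

section OrderedGroup

variable {G : Type*} [AddGroup G] {le : G → G → Prop} {a b c d u v x y z : G}

namespace IsCompat

theorem le_add_left_iff (hc : IsCompat le) (g x y : G) : le (g + x) (g + y) ↔ le x y :=
  ⟨fun h => by simpa using hc (-g) 0 _ _ h, fun h => by simpa using hc g 0 _ _ h⟩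

theorem le_add_right_iff (hc : IsCompat le) (g x y : G) : le (x + g) (y + g) ↔ le x y :=
  ⟨fun h => by simpa using hc 0 (-g) _ _ h, fun h => by simpa using hc 0 g _ _ h⟩

theorem incomp_add_left (hc : IsCompat le) (g : G) (h : Incomp le x y) :
    Incomp le (g + x) (g + y) :=
  (incomp_map_iff (hc.le_add_left_iff g)).2 h

theorem incomp_conj (hc : IsCompat le) (g : G) (h : Incomp le x y) :
    Incomp le (-g + x + g) (-g + y + g) :=
  (incomp_map_iff fun x y => (hc.le_add_right_iff g _ _).trans (hc.le_add_left_iff (-g) x y)).2 h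

theorem traceLe_add_left (hc : IsCompat le) (g : G) (h : TraceLe le x y) :
    TraceLe le (g + x) (g + y) := by
  simpa using h.map (Equiv.addLeft g) (hc.le_add_left_iff g)

theorem traceLe_add_right (hc : IsCompat le) (g : G) (h : TraceLe le x y) :
    TraceLe le (x + g) (y + g) := by
  simpa using h.map (Equiv.addRight g) (hc.le_add_right_iff g)

theorem traceLe_add (hc : IsCompat le) (hab : TraceLe le a b) (hcd : TraceLe le c d) :
    TraceLe le (a + c) (b + d) :=
  (hc.traceLe_add_left a hcd).trans (hc.traceLe_add_right d hab)

theorem traceLe_nsmul (hc : IsCompat le) (h : TraceLe le x y) (n : ℕ) :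
    TraceLe le (n • x) (n • y) := by
  induction n with
  | zero => simpa using TraceLe.refl (0 : G)
  | succ n ih => simpa only [succ_nsmul] using hc.traceLe_add ih h

end IsCompat

/-- `A(G)`, described through the positive multiples of its elements. -/
def antichainSet (le : G → G → Prop) : Set G := {x | ∀ n : ℕ, n • x ≠ 0 → Incomp le 0 (n • x)}

/-- Translating by `m • x` reduces the antichain condition on `ℤx` to comparisons with `0`. -/
theorem setOf_zmultiples_antichain_eq (hc : IsCompat le) :
    {x : G | ∀ m n : ℤ, m • x ≠ n • x → Incomp le (m • x) (n • x)} = antichainSet le := by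
  ext x
  refine ⟨fun h n hn => ?_, fun h m n hmn => ?_⟩
  · simpa using h 0 n (by simpa using hn.symm)
  · wlog hmn' : m ≤ n generalizing m n
    · exact (this n m hmn.symm (le_of_not_ge hmn')).symm
    obtain ⟨k, hk⟩ := Int.eq_ofNat_of_zero_le (sub_nonneg.2 hmn')
    have hn : n • x = m • x + k • x := by
      rw [← natCast_zsmul, ← add_zsmul, ← hk, add_sub_cancel]
    rw [hn] at hmn ⊢
    simpa using hc.incomp_add_left (m • x) (h k (by simpa using hmn.symm))

theorem zero_mem_antichainSet : (0 : G) ∈ antichainSet le := by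
  simp [antichainSet]

theorem neg_mem_antichainSet (hc : IsCompat le) (hx : x ∈ antichainSet le) :
    -x ∈ antichainSet le := by
  intro n hn
  rw [neg_nsmul, neg_ne_zero] at hn
  rw [neg_nsmul]
  simpa using (hc.incomp_add_left (-(n • x)) (hx n hn)).symm

theorem nsmul_mem_antichainSet (hx : x ∈ antichainSet le) (k : ℕ) :
    k • x ∈ antichainSet le := by
  intro n hn
  rw [← mul_nsmul] at hn ⊢
  exact hx _ hn

theorem conj_mem_antichainSet (hc : IsCompat le) (hx : x ∈ antichainSet le) (g : G) :
    -g + x + g ∈ antichainSet le := by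
  have hconj (n : ℕ) : n • (-g + x + g) = -g + n • x + g := by
    simpa using addConj_nsmul (a := -g) (b := x) (i := n)
  intro n hn
  rw [hconj] at hn ⊢
  simpa using hc.incomp_conj g (hx n fun h => hn (by simp [h]))

theorem mem_antichainSet_of_traceLe [IsTrans G le] [Std.Antisymm le] (hc : IsCompat le)
    (ha : a ∈ antichainSet le) (hb : b ∈ antichainSet le) (hax : TraceLe le a x)
    (hxb : TraceLe le x b) : x ∈ antichainSet le := fun n =>
  incomp_of_traceLe_of_traceLe (ha n) (hb n) (hc.traceLe_nsmul hax n) (hc.traceLe_nsmul hxb n)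

/-- Since the trace order is total, `u + v` lies trace-between `u + u` and `v + v`. -/
theorem add_mem_antichainSet [IsTrans G le] [Std.Antisymm le] (hc : IsCompat le)
    (h22 : ¬ Embeds2p2 le) (h31 : ¬ Embeds3p1 le)
    (hu : u ∈ antichainSet le) (hv : v ∈ antichainSet le) : u + v ∈ antichainSet le := by
  have huu : u + u ∈ antichainSet le := two_nsmul u ▸ nsmul_mem_antichainSet hu 2
  have hvv : v + v ∈ antichainSet le := two_nsmul v ▸ nsmul_mem_antichainSet hv 2
  rcases traceLe_total h22 h31 u v with h | h
  · exact mem_antichainSet_of_traceLe hc huu hvv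
      (hc.traceLe_add (.refl u) h) (hc.traceLe_add h (.refl v))
  · exact mem_antichainSet_of_traceLe hc hvv huu
      (hc.traceLe_add h (.refl v)) (hc.traceLe_add (.refl u) h)

theorem mem_antichainSet_of_le_of_le [IsTrans G le] [Std.Antisymm le] (hc : IsCompat le)
    (hx : x ∈ antichainSet le) (hy : y ∈ antichainSet le) (hxz : le x z) (hzy : le z y) :
    z ∈ antichainSet le :=
  mem_antichainSet_of_traceLe hc hx hy (traceLe_of_le hxz) (traceLe_of_le hzy)

theorem incomp_of_mem_antichainSet [IsTrans G le] [Std.Antisymm le] (hc : IsCompat le)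
    (h22 : ¬ Embeds2p2 le) (h31 : ¬ Embeds3p1 le)
    (hx : x ∈ antichainSet le) (hy : y ∈ antichainSet le) (hxy : x ≠ y) : Incomp le x y := by
  have hd : -x + y ∈ antichainSet le :=
    add_mem_antichainSet hc h22 h31 (neg_mem_antichainSet hc hx) hy
  simpa using hc.incomp_add_left x (hd 1 (by simpa [neg_add_eq_zero] using hxy))

theorem subset_antichainSet {K : Set G} (hK0 : (0 : G) ∈ K)
    (hKadd : ∀ x ∈ K, ∀ y ∈ K, x + y ∈ K) (hK : ∀ x ∈ K, ∀ y ∈ K, x ≠ y → Incomp le x y) :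
    K ⊆ antichainSet le := by
  intro x hx n hn
  have hnx (m : ℕ) : m • x ∈ K := by
    induction m with
    | zero => simpa using hK0
    | succ m ih => simpa only [succ_nsmul] using hKadd _ ih _ hx
  exact hK 0 hK0 _ (hnx n) hn.symm

end OrderedGroup

/-- In an ordered group whose order is a semiorder,
`A(G) := {x | ℤx is an antichain}` is a normal subgroup, a convex subset, and the
largest subgroup of `G` which is an antichain. -/
theorem antichain_subgroup_props {G : Type*} [AddGroup G] (le : G → G → Prop)
    (hpo : IsPartialOrderRel le) (hc : IsCompat le)
    (hsemi : ¬ Embeds2p2 le ∧ ¬ Embeds3p1 le)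
    (A : Set G)
    (hA : A = {x : G | ∀ m n : ℤ, m • x ≠ n • x → Incomp le (m • x) (n • x)}) :
    -- `A(G)` is a subgroup of `G`
    ((0 : G) ∈ A ∧ (∀ x ∈ A, -x ∈ A) ∧ ∀ x ∈ A, ∀ y ∈ A, x + y ∈ A) ∧
    -- it is normal
    (∀ x ∈ A, ∀ g : G, -g + x + g ∈ A) ∧
    -- it is a convex subset of `(G, ≤)`
    (∀ x y z : G, x ∈ A → y ∈ A → le x z → le z y → z ∈ A) ∧
    -- it is an antichain
    (∀ x ∈ A, ∀ y ∈ A, x ≠ y → Incomp le x y) ∧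
    -- it contains every subgroup of `G` which is an antichain
    (∀ K : Set G,
      ((0 : G) ∈ K ∧ (∀ x ∈ K, -x ∈ K) ∧ ∀ x ∈ K, ∀ y ∈ K, x + y ∈ K) →
      (∀ x ∈ K, ∀ y ∈ K, x ≠ y → Incomp le x y) → K ⊆ A) := by
  obtain ⟨-, htrans, hantisymm⟩ := hpo
  obtain ⟨h22, h31⟩ := hsemi
  have : IsTrans G le := ⟨htrans⟩
  have : Std.Antisymm le := ⟨hantisymm⟩
  obtain rfl : A = antichainSet le := hA.trans (setOf_zmultiples_antichain_eq hc)
  refine ⟨⟨zero_mem_antichainSet, fun x => neg_mem_antichainSet hc,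
      fun x hx y => add_mem_antichainSet hc h22 h31 hx⟩,
    fun x hx => conj_mem_antichainSet hc hx,
    fun x y z => mem_antichainSet_of_le_of_le hc,
    fun x hx y hy => incomp_of_mem_antichainSet hc h22 h31 hx hy,
    fun K ⟨hK0, _, hKadd⟩ => subset_antichainSet hK0 hKadd⟩

end ThrPaper
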